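/- arXiv:1612.05131 — 5 statements merged into one kernel-verified Lean document; each statement's English description precedes it below -/
import Mathlib

section
/- The arc set produced by any complete run of the arc-eager system is projective: for any two arcs, their spans [min(h,d), max(h,d)] are either disjoint or nested, never properly crossing. -/
/-- A configuration of the arc-eager transition system: a stack `S` of word
indices (top at the head), a buffer `B` of word indices (front at the head),
and a set `A` of arcs `(head, dependent)`. -/
structure Config where
  S : List ℕ
  B : List ℕ
  A : Set (ℕ × ℕ)

/-- The four arc-eager transitions. -/
inductive Step : Config → Config → Prop
  | shift (S : List ℕ) (b : ℕ) (B : List ℕ) (A : Set (ℕ × ℕ)) :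
      Step ⟨S, b :: B, A⟩ ⟨b :: S, B, A⟩
  | rightArc (s : ℕ) (S : List ℕ) (b : ℕ) (B : List ℕ) (A : Set (ℕ × ℕ)) :
      Step ⟨s :: S, b :: B, A⟩ ⟨b :: s :: S, B, insert (s, b) A⟩
  | leftArc (s : ℕ) (S : List ℕ) (b : ℕ) (B : List ℕ) (A : Set (ℕ × ℕ))
      (hroot : s ≠ 0) (hhead : ∀ k, (k, s) ∉ A) :
      Step ⟨s :: S, b :: B, A⟩ ⟨S, b :: B, insert (b, s) A⟩
  | reduce (s : ℕ) (S : List ℕ) (B : List ℕ) (A : Set (ℕ × ℕ))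
      (hhead : ∃ k, (k, s) ∈ A) :
      Step ⟨s :: S, B, A⟩ ⟨S, B, A⟩

/-- Initial configuration for a sentence with words indexed `1, …, n`. -/
def Init (n : ℕ) : Config := ⟨[], (List.range n).map (· + 1), ∅⟩

/-!
The words still on the stack or in the buffer, read as `S.reverse ++ B`, form an increasing
list: shift and right-arc leave it unchanged, left-arc and reduce delete one word. An arc is
only ever drawn between the neighbours `s` (stack top) and `b` (buffer front) of this list, so
no word of the list lies strictly inside any arc, an invariant preserved because the list only
shrinks. A new arc therefore has no endpoint strictly inside an earlier arc, and two arcs can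
only cross if an endpoint of one lies strictly inside the other.
-/

def SpanContains (e : ℕ × ℕ) (x : ℕ) : Prop :=
  min e.1 e.2 < x ∧ x < max e.1 e.2

def Crosses (e₁ e₂ : ℕ × ℕ) : Prop :=
  min e₁.1 e₁.2 < min e₂.1 e₂.2 ∧ min e₂.1 e₂.2 < max e₁.1 e₁.2 ∧
    max e₁.1 e₁.2 < max e₂.1 e₂.2

def NoCross (A : Set (ℕ × ℕ)) : Prop :=
  ∀ e₁ ∈ A, ∀ e₂ ∈ A, ¬Crosses e₁ e₂

lemma Crosses.spanContains_left {e₁ e₂ : ℕ × ℕ} (h : Crosses e₁ e₂) :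
    SpanContains e₁ e₂.1 ∨ SpanContains e₁ e₂.2 := by
  unfold Crosses at h; unfold SpanContains; omega

lemma Crosses.spanContains_right {e₁ e₂ : ℕ × ℕ} (h : Crosses e₁ e₂) :
    SpanContains e₂ e₁.1 ∨ SpanContains e₂ e₁.2 := by
  unfold Crosses at h; unfold SpanContains; omega

lemma NoCross.insert {A : Set (ℕ × ℕ)} {p : ℕ × ℕ} (hA : NoCross A)
    (hp : ∀ e ∈ A, ¬SpanContains e p.1 ∧ ¬SpanContains e p.2) :
    NoCross (insert p A) := by
  rintro e₁ (rfl | he₁) e₂ (rfl | he₂) hcross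
  · exact (lt_irrefl _) hcross.1
  · exact hcross.spanContains_right.elim (hp e₂ he₂).1 (hp e₂ he₂).2
  · exact hcross.spanContains_left.elim (hp e₁ he₁).1 (hp e₁ he₁).2
  · exact hA e₁ he₁ e₂ he₂ hcross

lemma not_spanContains_of_pairwise_lt {l₁ l₂ : List ℕ} {s b x : ℕ}
    (hsort : (l₁ ++ s :: b :: l₂).Pairwise (· < ·)) (hx : x ∈ l₁ ++ s :: b :: l₂) :
    ¬SpanContains (s, b) x := by
  simp only [List.pairwise_append, List.pairwise_cons, List.mem_cons] at hsort
  obtain ⟨-, ⟨hs, hb, -⟩, hl₁⟩ := hsort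
  simp only [List.mem_append, List.mem_cons] at hx
  have hsb : s < b := hs b (.inl rfl)
  unfold SpanContains
  rcases hx with hx | rfl | rfl | hx
  · have := hl₁ x hx s (.inl rfl); omega
  · omega
  · omega
  · have := hb x hx; omega

lemma spanContains_swap (e : ℕ × ℕ) (x : ℕ) : SpanContains e.swap x ↔ SpanContains e x := by
  simp [SpanContains, min_comm, max_comm]

structure RunInv (L : List ℕ) (A : Set (ℕ × ℕ)) : Prop where
  sorted : L.Pairwise (· < ·)
  not_spanContains : ∀ e ∈ A, ∀ x ∈ L, ¬SpanContains e x
  noCross : NoCross A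

namespace RunInv

variable {L L' : List ℕ} {A : Set (ℕ × ℕ)}

lemma sublist (h : RunInv L A) (hL : L'.Sublist L) : RunInv L' A where
  sorted := h.sorted.sublist hL
  not_spanContains e he x hx := h.not_spanContains e he x (hL.subset hx)
  noCross := h.noCross

lemma insert_arc {p : ℕ × ℕ} (h : RunInv L A) (hp₁ : p.1 ∈ L) (hp₂ : p.2 ∈ L)
    (hp : ∀ x ∈ L, ¬SpanContains p x) : RunInv L (insert p A) where
  sorted := h.sorted
  not_spanContains := by
    rintro e (rfl | he)
    exacts [hp, h.not_spanContains e he]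
  noCross := h.noCross.insert fun e he =>
    ⟨h.not_spanContains e he _ hp₁, h.not_spanContains e he _ hp₂⟩

lemma insert_arc_of_adjacent {l₁ l₂ : List ℕ} {s b : ℕ} {p : ℕ × ℕ}
    (h : RunInv (l₁ ++ s :: b :: l₂) A) (hp : p = (s, b) ∨ p = (b, s)) :
    RunInv (l₁ ++ s :: b :: l₂) (insert p A) := by
  have hp_span : ∀ x ∈ l₁ ++ s :: b :: l₂, ¬SpanContains p x := fun x hx => by
    rcases hp with rfl | rfl
    · exact not_spanContains_of_pairwise_lt h.sorted hx
    · exact (spanContains_swap (s, b) x).not.mpr (not_spanContains_of_pairwise_lt h.sorted hx)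
  rcases hp with rfl | rfl <;> exact h.insert_arc (by simp) (by simp) hp_span

end RunInv

def Config.words (c : Config) : List ℕ := c.S.reverse ++ c.B

lemma runInv_init (n : ℕ) : RunInv (Init n).words (Init n).A where
  sorted := by
    simpa [Config.words, Init, List.pairwise_map] using List.pairwise_lt_range (n := n)
  not_spanContains := by simp [Init]
  noCross := by simp [NoCross, Init]

lemma Step.runInv {c c' : Config} (h : Step c c') (hc : RunInv c.words c.A) :
    RunInv c'.words c'.A := by
  cases h with
  | shift S b B A => simpa [Config.words] using hc
  | rightArc s S b B A =>
    simp only [Config.words, List.reverse_cons, List.append_assoc, List.cons_append,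
      List.nil_append] at hc ⊢
    exact hc.insert_arc_of_adjacent (.inl rfl)
  | leftArc s S b B A =>
    simp only [Config.words, List.reverse_cons, List.append_assoc, List.cons_append,
      List.nil_append] at hc ⊢
    exact (hc.insert_arc_of_adjacent (.inr rfl)).sublist
      ((List.sublist_cons_self s _).append_left _)
  | reduce s S B A =>
    simp only [Config.words, List.reverse_cons, List.append_assoc, List.cons_append,
      List.nil_append] at hc ⊢
    exact hc.sublist ((List.sublist_cons_self s _).append_left _)

lemma runInv_of_reflTransGen {n : ℕ} {c : Config} (h : Relation.ReflTransGen Step (Init n) c) :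
    RunInv c.words c.A := by
  induction h with
  | refl => exact runInv_init n
  | tail _ hstep ih => exact hstep.runInv ih

theorem stmt7_general (n : ℕ) (c : Config)
    (h : Relation.ReflTransGen Step (Init n) c) :
    ∀ e₁ ∈ c.A, ∀ e₂ ∈ c.A,
      ¬(min e₁.1 e₁.2 < min e₂.1 e₂.2 ∧ min e₂.1 e₂.2 < max e₁.1 e₁.2 ∧
        max e₁.1 e₁.2 < max e₂.1 e₂.2) :=
  (runInv_of_reflTransGen h).noCross

/-- The arc set produced by any complete run of the arc-eager system is
projective: the spans of any two arcs are disjoint or nested, never properly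
crossing. -/
theorem stmt7 (n : ℕ) (c : Config)
    (h : Relation.ReflTransGen Step (Init n) c) (hfin : c.B = []) :
    ∀ e₁ ∈ c.A, ∀ e₂ ∈ c.A,
      ¬(min e₁.1 e₁.2 < min e₂.1 e₂.2 ∧ min e₂.1 e₂.2 < max e₁.1 e₁.2 ∧
        max e₁.1 e₁.2 < max e₂.1 e₂.2) :=
  stmt7_general n c h
end

section
/- The required-arc and forbidden-arc sets defined recursively by the arc-eager actions are always disjoint: for every reachable configuration Λ and every applicable action a, RA(Λ, a) ∩ FA(Λ, a) = ∅. -/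
/-- Reversal of a set of arcs. -/
def Rev (ra : Set (ℕ × ℕ)) : Set (ℕ × ℕ) := {p | (p.2, p.1) ∈ ra}

/-- `Earcs S ra = ({t→u, u→t : t, u ∈ S, t ≠ u} ∪ Rev ra) \ ra`. -/
def Earcs (S : List ℕ) (ra : Set (ℕ × ℕ)) : Set (ℕ × ℕ) :=
  ({p | p.1 ∈ S ∧ p.2 ∈ S ∧ p.1 ≠ p.2} ∪ Rev ra) \ ra

namespace Config

def HeadClosed (A : Set (ℕ × ℕ)) (S : List ℕ) : Prop :=
  ∀ p ∈ A, ∀ t, t <:+ S → p.2 ∈ t → p.1 ∈ t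

lemma HeadClosed.of_cons {A : Set (ℕ × ℕ)} {s : ℕ} {S : List ℕ} (h : HeadClosed A (s :: S)) :
    HeadClosed A S :=
  fun p hp t ht => h p hp t (ht.trans (List.suffix_cons s S))

lemma HeadClosed.cons {A : Set (ℕ × ℕ)} {b : ℕ} {S : List ℕ} (h : HeadClosed A S)
    (hb : ∀ p ∈ A, p.2 ≠ b) : HeadClosed A (b :: S) := by
  intro p hp t ht hp2
  rcases List.suffix_cons_iff.mp ht with rfl | ht
  · rcases List.mem_cons.mp hp2 with h2 | h2
    · exact absurd h2 (hb p hp)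
    · exact List.mem_cons_of_mem _ (h p hp S List.suffix_rfl h2)
  · exact h p hp t ht hp2

structure Wellformed (c : Config) : Prop where
  nodup_B : c.B.Nodup
  nodup_S : c.S.Nodup
  disjoint_S_B : c.S.Disjoint c.B
  dep_notMem_B : ∀ p ∈ c.A, p.2 ∉ c.B
  headClosed : HeadClosed c.A c.S

lemma wellformed_init (n : ℕ) : (Init n).Wellformed where
  nodup_B := List.nodup_range.map fun _ _ => Nat.add_right_cancel
  nodup_S := List.nodup_nil
  disjoint_S_B := List.disjoint_nil_left _
  dep_notMem_B _ hp := hp.elim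
  headClosed _ hp := hp.elim

lemma Wellformed.step {c c' : Config} (hc : c.Wellformed) (hs : Step c c') : c'.Wellformed := by
  obtain ⟨hB, hS, hSB, hdep, hhead⟩ := hc
  cases hs with
  | shift S b B A =>
    obtain ⟨hbB, hB⟩ := List.nodup_cons.mp hB
    obtain ⟨hbS, hSB⟩ := List.disjoint_cons_right.mp hSB
    exact ⟨hB, hS.cons hbS, List.disjoint_cons_left.mpr ⟨hbB, hSB⟩,
      fun p hp h => hdep p hp (List.mem_cons_of_mem _ h),
      hhead.cons fun p hp h => hdep p hp (h ▸ List.mem_cons_self)⟩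
  | rightArc s S b B A =>
    obtain ⟨hbB, hB⟩ := List.nodup_cons.mp hB
    obtain ⟨hbS, hSB⟩ := List.disjoint_cons_right.mp hSB
    refine ⟨hB, hS.cons hbS, List.disjoint_cons_left.mpr ⟨hbB, hSB⟩, ?_, ?_⟩
    · rintro p (rfl | hp) h
      · exact hbB h
      · exact hdep p hp (List.mem_cons_of_mem _ h)
    · rintro p (rfl | hp) t ht hp2
      · rcases List.suffix_cons_iff.mp ht with rfl | ht
        · exact List.mem_cons_of_mem _ List.mem_cons_self
        · exact absurd (ht.subset hp2) hbS
      · exact hhead.cons (fun p hp h => hdep p hp (h ▸ List.mem_cons_self)) p hp t ht hp2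
  | leftArc s S b B A _ _ =>
    obtain ⟨hsS, hS⟩ := List.nodup_cons.mp hS
    refine ⟨hB, hS, (List.disjoint_cons_left.mp hSB).2, ?_, ?_⟩
    · rintro p (rfl | hp)
      · exact hSB List.mem_cons_self
      · exact hdep p hp
    · rintro p (rfl | hp) t ht hp2
      · exact absurd (ht.subset hp2) hsS
      · exact hhead.of_cons p hp t ht hp2
  | reduce s S B A _ =>
    exact ⟨hB, hS.of_cons, (List.disjoint_cons_left.mp hSB).2, hdep, hhead.of_cons⟩

lemma Wellformed.of_reflTransGen {n : ℕ} {c : Config}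
    (h : Relation.ReflTransGen Step (Init n) c) : c.Wellformed := by
  induction h with
  | refl => exact wellformed_init n
  | tail _ hs ih => exact ih.step hs

variable {c : Config} {s b : ℕ}

lemma Wellformed.head_mem_S (hc : c.Wellformed) {p : ℕ × ℕ} (hp : p ∈ c.A) (h : p.2 ∈ c.S) :
    p.1 ∈ c.S :=
  hc.headClosed p hp c.S List.suffix_rfl h

lemma Wellformed.disjoint_leftArc (hc : c.Wellformed) (hs : s ∈ c.S) (hhead : ∀ k, (k, s) ∉ c.A) :
    Disjoint (insert (b, s) c.A)
      ({p : ℕ × ℕ | p.2 = s ∧ p.1 ∈ c.B ∧ p.1 ≠ b} ∪ {p : ℕ × ℕ | p.1 = s ∧ p.2 ∈ c.B}) := by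
  rw [Set.disjoint_left]
  rintro p (rfl | hp) (⟨h2, h1, hne⟩ | ⟨h1, h2⟩)
  · exact hne rfl
  · exact hc.disjoint_S_B hs h2
  · exact hhead p.1 (h2 ▸ hp)
  · exact hc.dep_notMem_B p hp h2

lemma Wellformed.disjoint_rightArc (hc : c.Wellformed) (hs : s ∈ c.S) (hb : b ∈ c.B) :
    Disjoint (insert (s, b) c.A)
      ({p : ℕ × ℕ | p.2 = b ∧ (p.1 ∈ c.B ∨ p.1 ∈ c.S) ∧ p.1 ≠ s} ∪
        {p : ℕ × ℕ | p.1 = b ∧ p.2 ∈ c.S}) := by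
  rw [Set.disjoint_left]
  rintro p (rfl | hp) (⟨h2, _, hne⟩ | ⟨h1, h2⟩)
  · exact hne rfl
  · exact hc.disjoint_S_B ((h1 : s = b) ▸ hs) hb
  · exact hc.dep_notMem_B p hp (h2 ▸ hb)
  · exact hc.disjoint_S_B (hc.head_mem_S hp h2) (h1 ▸ hb)

lemma Wellformed.disjoint_reduce (hc : c.Wellformed) (hs : s ∈ c.S) :
    Disjoint c.A {p : ℕ × ℕ | p.2 = s ∧ p.1 ∈ c.B} := by
  rw [Set.disjoint_left]
  rintro p hp ⟨h2, h1⟩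
  exact hc.disjoint_S_B (hc.head_mem_S hp (h2 ▸ hs)) h1

lemma Wellformed.disjoint_shift (hc : c.Wellformed) (hb : b ∈ c.B) :
    Disjoint c.A {p : ℕ × ℕ | p.2 = b ∧ (p.1 ∈ c.B ∨ p.1 ∈ c.S)} :=
  Set.disjoint_left.mpr fun p hp h => hc.dep_notMem_B p hp (h.1 ▸ hb)

end Config

lemma inter_union_Earcs_eq_empty {ra X : Set (ℕ × ℕ)} (S : List ℕ) (h : Disjoint ra X) :
    ra ∩ (X ∪ Earcs S ra) = ∅ := by
  rw [← Set.disjoint_iff_inter_eq_empty, Set.disjoint_union_right]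
  exact ⟨h, Set.disjoint_sdiff_right⟩

/-- For every reachable arc-eager configuration with stack top `s` and buffer
front `b`, and every applicable action, the required-arc set `RA(Λ, a)` and
the forbidden-arc set `FA(Λ, a)` of the paper are disjoint. The four
conjuncts treat Left-Arc (under its precondition that `s` is headless),
Right-Arc, Reduce (under its precondition that `s` has a head), and Shift. -/
theorem stmt11 (n : ℕ) (c : Config)
    (h : Relation.ReflTransGen Step (Init n) c)
    (s b : ℕ) (S' B' : List ℕ) (hS : c.S = s :: S') (hB : c.B = b :: B') :
    ((∀ k, (k, s) ∉ c.A) →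
      (insert (b, s) c.A) ∩
        ({p : ℕ × ℕ | p.2 = s ∧ p.1 ∈ c.B ∧ p.1 ≠ b} ∪
         {p : ℕ × ℕ | p.1 = s ∧ p.2 ∈ c.B} ∪
         Earcs c.S (insert (b, s) c.A)) = ∅) ∧
    ((insert (s, b) c.A) ∩
        ({p : ℕ × ℕ | p.2 = b ∧ (p.1 ∈ c.B ∨ p.1 ∈ c.S) ∧ p.1 ≠ s} ∪
         {p : ℕ × ℕ | p.1 = b ∧ p.2 ∈ c.S} ∪
         Earcs c.S (insert (s, b) c.A)) = ∅) ∧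
    ((∃ k, (k, s) ∈ c.A) →
      c.A ∩ ({p : ℕ × ℕ | p.2 = s ∧ p.1 ∈ c.B} ∪ Earcs c.S c.A) = ∅) ∧
    (c.A ∩ ({p : ℕ × ℕ | p.2 = b ∧ (p.1 ∈ c.B ∨ p.1 ∈ c.S)} ∪
        Earcs c.S c.A) = ∅) := by
  have hc := Config.Wellformed.of_reflTransGen h
  have hs : s ∈ c.S := hS ▸ List.mem_cons_self
  have hb : b ∈ c.B := hB ▸ List.mem_cons_self
  exact ⟨fun hhead => inter_union_Earcs_eq_empty _ (hc.disjoint_leftArc hs hhead),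
    inter_union_Earcs_eq_empty _ (hc.disjoint_rightArc hs hb),
    fun _ => inter_union_Earcs_eq_empty _ (hc.disjoint_reduce hs),
    inter_union_Earcs_eq_empty _ (hc.disjoint_shift hb)⟩
end

section
/- After applying an action a to configuration Λ_i, the new configuration Λ_{i+1} satisfies RA(Λ_{i+1}) = Σ_{i+1} (the set of arcs built so far) and FA(Λ_{i+1}) ⊇ E(S_{i+1}, Σ_{i+1}), i.e., no arc between two distinct words both on the stack can appear in any completion unless it is already in Σ_{i+1}. -/
def InvC (c : Config) : Prop :=
  c.S.Nodup ∧ (∀ x ∈ c.S, x ∉ c.B) ∧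
  ∀ e ∈ c.A, e.2 ∉ c.B ∧ (e.2 ∈ c.S → e.1 ∉ c.B)

def Blocked (c : Config) (e : ℕ × ℕ) : Prop :=
  e ∉ c.A ∧ ((e.1 ∉ c.S ∧ e.1 ∉ c.B) ∨ (e.2 ∉ c.S ∧ e.2 ∉ c.B) ∨
    (e.1 ∉ c.B ∧ e.2 ∉ c.B))

lemma inv_step {c d : Config} (hc : InvC c) (hbn : c.B.Nodup) (h : Step c d) :
    InvC d ∧ d.B.Nodup := by
  obtain ⟨h1, h3, h4⟩ := hc
  cases h with
  | shift S b B A =>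
    simp only [InvC, List.nodup_cons, List.mem_cons, not_or] at *
    refine ⟨⟨⟨fun hb => (h3 b hb).1 rfl, h1⟩, ?_, ?_⟩, hbn.2⟩
    · rintro x hx
      rcases hx with rfl | hx
      · exact hbn.1
      · exact (h3 x hx).2
    · rintro e he
      obtain ⟨he1, he2⟩ := h4 e he
      refine ⟨he1.2, ?_⟩
      rintro (hb | hS)
      · exact absurd hb he1.1
      · exact (he2 hS).2
  | rightArc s S b B A =>
    simp only [InvC, List.nodup_cons, List.mem_cons, not_or] at *
    refine ⟨⟨⟨?_, h1⟩, ?_, ?_⟩, hbn.2⟩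
    · exact ⟨fun hh => (h3 s (Or.inl rfl)).1 hh.symm, fun hb => (h3 b (Or.inr hb)).1 rfl⟩
    · rintro x hx
      rcases hx with rfl | hx
      · exact hbn.1
      · exact (h3 x hx).2
    · rintro e he
      rcases Set.mem_insert_iff.mp he with rfl | he
      · exact ⟨hbn.1, fun _ => (h3 s (Or.inl rfl)).2⟩
      obtain ⟨he1, he2⟩ := h4 e he
      refine ⟨he1.2, ?_⟩
      rintro (hb | hS)
      · exact absurd hb he1.1
      · exact (he2 hS).2
  | leftArc s S b B A hroot hhead =>
    simp only [InvC, List.nodup_cons] at *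
    refine ⟨⟨h1.2, fun x hx => h3 x (List.mem_cons_of_mem _ hx), ?_⟩, hbn⟩
    rintro e he
    rcases Set.mem_insert_iff.mp he with rfl | he
    · exact ⟨h3 s List.mem_cons_self, fun hS => absurd hS h1.1⟩
    · obtain ⟨he1, he2⟩ := h4 e he
      exact ⟨he1, fun hS => he2 (List.mem_cons_of_mem _ hS)⟩
  | reduce s S B A hh =>
    simp only [InvC, List.nodup_cons] at *
    refine ⟨⟨h1.2, fun x hx => h3 x (List.mem_cons_of_mem _ hx), ?_⟩, hbn⟩
    rintro e he
    obtain ⟨he1, he2⟩ := h4 e he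
    exact ⟨he1, fun hS => he2 (List.mem_cons_of_mem _ hS)⟩

lemma blocked_step {c d : Config} (h : Step c d) {e : ℕ × ℕ}
    (hb : Blocked c e) : Blocked d e := by
  obtain ⟨hA, hd⟩ := hb
  cases h with
  | shift S b B A =>
    refine ⟨hA, ?_⟩
    simp only [List.mem_cons, not_or] at *
    tauto
  | rightArc s S b B A =>
    have hne : e ≠ (s, b) := by
      rintro rfl
      simp only [List.mem_cons, not_or] at hd
      tauto
    refine ⟨fun hmem => (Set.mem_insert_iff.mp hmem).elim hne hA, ?_⟩
    simp only [List.mem_cons, not_or] at *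
    tauto
  | leftArc s S b B A hroot hhead =>
    have hne : e ≠ (b, s) := by
      rintro rfl
      simp only [List.mem_cons, not_or] at hd
      tauto
    refine ⟨fun hmem => (Set.mem_insert_iff.mp hmem).elim hne hA, ?_⟩
    simp only [List.mem_cons, not_or] at *
    tauto
  | reduce s S B A hh =>
    refine ⟨hA, ?_⟩
    simp only [List.mem_cons, not_or] at *
    tauto

lemma mono_step {c d : Config} (h : Step c d) : c.A ⊆ d.A := by
  cases h with
  | shift S b B A => exact subset_rfl
  | rightArc s S b B A => exact Set.subset_insert _ _
  | leftArc s S b B A h1 h2 => exact Set.subset_insert _ _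
  | reduce s S B A hh => exact subset_rfl

lemma earcs_blocked {c : Config} (hc : InvC c) {e : ℕ × ℕ}
    (he : e ∈ Earcs c.S c.A) : Blocked c e := by
  obtain ⟨hmem, hA⟩ := he
  refine ⟨hA, ?_⟩
  rcases hmem with ⟨h1, h2, _⟩ | hrev
  · exact Or.inr (Or.inr ⟨hc.2.1 _ h1, hc.2.1 _ h2⟩)
  · obtain ⟨hb1, hb2⟩ := hc.2.2 _ hrev
    by_cases hS : e.1 ∈ c.S
    · exact Or.inr (Or.inr ⟨hb1, hb2 hS⟩)
    · exact Or.inl ⟨hS, hb1⟩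

lemma inv_reach {n : ℕ} {c : Config} (h : Relation.ReflTransGen Step (Init n) c) :
    InvC c ∧ c.B.Nodup := by
  induction h with
  | refl =>
      refine ⟨⟨List.nodup_nil, by simp [Init], by simp [Init]⟩, ?_⟩
      exact (List.nodup_range : (List.range n).Nodup).map (fun a b => by omega)
  | tail _ hstep ih => exact inv_step ih.1 ih.2 hstep

lemma mono_rtg {c c' : Config} (h : Relation.ReflTransGen Step c c') : c.A ⊆ c'.A := by
  induction h with
  | refl => exact subset_rfl
  | tail _ hstep ih => exact ih.trans (mono_step hstep)

lemma blocked_rtg {c c' : Config} (h : Relation.ReflTransGen Step c c') {e : ℕ × ℕ}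
    (hb : Blocked c e) : Blocked c' e := by
  induction h with
  | refl => exact hb
  | tail _ hstep ih => exact blocked_step hstep ih


/-- For any reachable configuration `c`, the required set of any completion
(a continuation of the run reaching an empty buffer) is exactly the arcs
`c.A` built so far — every completion contains them — and every arc of
`Earcs c.S c.A` (arcs between two distinct words both on the stack, or
reversals of built arcs, not already built) is excluded from every
completion. -/
theorem stmt12 (n : ℕ) (c c' : Config)
    (h : Relation.ReflTransGen Step (Init n) c)
    (h' : Relation.ReflTransGen Step c c') (hfin : c'.B = []) :
    c.A ⊆ c'.A ∧ ∀ e ∈ Earcs c.S c.A, e ∉ c'.A :=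
  ⟨mono_rtg h', fun _ he => (blocked_rtg h' (earcs_blocked (inv_reach h).1 he)).1⟩
end

section
/- In the arc-eager system, once a word w has been popped from the stack (by Left-Arc or Reduce), no arc incident to w can be added in any subsequent transition; hence the set of arcs incident to w in the final tree equals the set of arcs incident to w at the moment of popping. -/
namespace Step

variable {c c' : Config}

theorem not_mem_of_not_mem {w : ℕ} (h : Step c c') (hS : w ∉ c.S) (hB : w ∉ c.B) :
    w ∉ c'.S ∧ w ∉ c'.B := by
  cases h <;> simp_all

theorem arcs_subset (h : Step c c') : c.A ⊆ c'.A := by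
  cases h <;> simp [Set.subset_insert]

theorem mem_of_mem_new_arc (h : Step c c') {e : ℕ × ℕ} (he : e ∈ c'.A) (hne : e ∉ c.A) :
    (e.1 ∈ c.S ∨ e.1 ∈ c.B) ∧ (e.2 ∈ c.S ∨ e.2 ∈ c.B) := by
  cases h <;> simp_all

theorem incident_arcs_eq {w : ℕ} (h : Step c c') (hS : w ∉ c.S) (hB : w ∉ c.B) :
    {e : ℕ × ℕ | e ∈ c'.A ∧ (e.1 = w ∨ e.2 = w)} =
      {e : ℕ × ℕ | e ∈ c.A ∧ (e.1 = w ∨ e.2 = w)} := by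
  ext e
  refine ⟨fun ⟨he, hw⟩ => ⟨?_, hw⟩, fun ⟨he, hw⟩ => ⟨h.arcs_subset he, hw⟩⟩
  by_contra hne
  have hends := h.mem_of_mem_new_arc he hne
  rcases hw with rfl | rfl
  · exact hends.1.elim hS hB
  · exact hends.2.elim hS hB

end Step

/-- Once a word `w` has left both the stack and the buffer, it never
reappears; every arc added by a transition has both endpoints in the current
stack or buffer; hence the arcs incident to `w` never change after `w` has
been popped. -/
theorem stmt13 (w : ℕ) :
    (∀ c c' : Config, Step c c' → w ∉ c.S → w ∉ c.B → w ∉ c'.S ∧ w ∉ c'.B) ∧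
    (∀ c c' : Config, Step c c' → ∀ e : ℕ × ℕ, e ∈ c'.A → e ∉ c.A →
      (e.1 ∈ c.S ∨ e.1 ∈ c.B) ∧ (e.2 ∈ c.S ∨ e.2 ∈ c.B)) ∧
    (∀ c c' : Config, Relation.ReflTransGen Step c c' → w ∉ c.S → w ∉ c.B →
      {e : ℕ × ℕ | e ∈ c'.A ∧ (e.1 = w ∨ e.2 = w)} =
        {e : ℕ × ℕ | e ∈ c.A ∧ (e.1 = w ∨ e.2 = w)}) := by
  refine ⟨fun _ _ h => h.not_mem_of_not_mem, fun _ _ h _ => h.mem_of_mem_new_arc, ?_⟩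
  intro c c' hrel
  induction hrel using Relation.ReflTransGen.head_induction_on with
  | refl => exact fun _ _ => rfl
  | head hstep _ ih =>
    intro hS hB
    obtain ⟨hS', hB'⟩ := hstep.not_mem_of_not_mem hS hB
    rw [ih hS' hB', hstep.incident_arcs_eq hS hB]
end

section
/- If a transition sequence of the arc-eager system reaches a final configuration (empty buffer, stack containing only the root), then the constructed arc set Σ is a spanning arborescence on the words rooted at the artificial root: every non-root word has exactly one head and the arc relation is acyclic and connected. -/
/-!
The key invariant is that every word is reachable along arcs from some word still on the stack
or in the buffer. Left-Arc and Reduce remove a word whose head remains on the stack or in the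
buffer (for Reduce because a stack word that has a head has it deeper in the stack), so the
invariant survives every transition. In a final configuration only the root remains, so every
word is reachable from it; hence every other word has a head, unique by the preconditions, and
the arcs are in bijection with the `n` words.
-/

open Relation

theorem ncard_image_snd_of_head_unique {α β : Type*} {A : Set (α × β)}
    (huniq : ∀ a a' b, (a, b) ∈ A → (a', b) ∈ A → a = a') :
    (Prod.snd '' A).ncard = A.ncard :=
  Set.InjOn.ncard_image <| by
    rintro ⟨a, b⟩ hab ⟨a', b'⟩ hab' (rfl : b = b')
    rw [huniq a a' b hab hab']

theorem head_unique_insert {α β : Type*} {A : Set (α × β)} {h : α} {d : β}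
    (huniq : ∀ a a' b, (a, b) ∈ A → (a', b) ∈ A → a = a') (hd : ∀ a, (a, d) ∉ A) :
    ∀ a a' b, (a, b) ∈ insert (h, d) A → (a', b) ∈ insert (h, d) A → a = a' := by
  simp only [Set.mem_insert_iff, Prod.mk.injEq]
  rintro a a' b (⟨rfl, rfl⟩ | hab) hab'
  · rcases hab' with ⟨rfl, -⟩ | hab'
    · rfl
    · exact (hd _ hab').elim
  · rcases hab' with ⟨-, rfl⟩ | hab'
    · exact (hd _ hab).elim
    · exact huniq a a' b hab hab'

theorem exists_reflTransGen_of_pop {α : Type*} {R : α → α → Prop} {s r d : α} {L : List α}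
    (hr : r ∈ L) (hrs : R r s) (h : ∃ a ∈ s :: L, ReflTransGen R a d) :
    ∃ a ∈ L, ReflTransGen R a d := by
  obtain ⟨a, ha, had⟩ := h
  rcases List.mem_cons.mp ha with rfl | ha
  · exact ⟨r, hr, had.head hrs⟩
  · exact ⟨a, ha, had⟩

namespace ArcEager

def HeadsBelow (A : Set (ℕ × ℕ)) : List ℕ → Prop
  | [] => True
  | x :: L => (∀ h, (h, x) ∈ A → h ∈ L) ∧ HeadsBelow A L

theorem HeadsBelow.insert {A : Set (ℕ × ℕ)} {h d : ℕ} {L : List ℕ} (hL : HeadsBelow A L)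
    (hd : d ∉ L) : HeadsBelow (insert (h, d) A) L := by
  induction L with
  | nil => trivial
  | cons x L ih =>
    refine ⟨fun k hk => ?_, ih hL.2 fun hdL => hd (List.mem_cons_of_mem x hdL)⟩
    rcases hk with hk | hk
    · exact (hd ((Prod.mk.inj hk).2 ▸ List.mem_cons_self)).elim
    · exact hL.1 k hk

/-- `W` is the set of words of the sentence, root included. -/
structure Invariant (W : Set ℕ) (c : Config) : Prop where
  arc_mem : ∀ e ∈ c.A, e.1 ∈ W ∧ e.2 ∈ W
  mem_of_mem_stack_buffer : ∀ x ∈ c.S ++ c.B, x ∈ W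
  nodup : (c.S ++ c.B).Nodup
  head_unique : ∀ h h' d, (h, d) ∈ c.A → (h', d) ∈ c.A → h = h'
  buffer_headless : ∀ d ∈ c.B, ∀ h, (h, d) ∉ c.A
  root_headless : ∀ h, (h, 0) ∉ c.A
  root_front : 0 ∈ c.B → c.S = [] ∧ c.B.head? = some 0
  heads_below : HeadsBelow c.A c.S
  reachable : ∀ d ∈ W, ∃ a ∈ c.S ++ c.B, ReflTransGen (fun x y => (x, y) ∈ c.A) a d

namespace Invariant

variable {W : Set ℕ} {S B : List ℕ} {s b : ℕ} {A : Set (ℕ × ℕ)}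

theorem init {ws : List ℕ} (hnd : (0 :: ws).Nodup) (hW : ∀ x, x ∈ W ↔ x ∈ 0 :: ws) :
    Invariant W ⟨[], 0 :: ws, ∅⟩ where
  arc_mem e he := (Set.notMem_empty e he).elim
  mem_of_mem_stack_buffer x hx := (hW x).2 hx
  nodup := hnd
  head_unique _ _ _ h := (Set.notMem_empty _ h).elim
  buffer_headless _ _ _ h := (Set.notMem_empty _ h).elim
  root_headless _ h := (Set.notMem_empty _ h).elim
  root_front _ := ⟨rfl, rfl⟩
  heads_below := trivial
  reachable d hd := ⟨d, (hW d).1 hd, .refl⟩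

theorem shift (hI : Invariant W ⟨S, b :: B, A⟩) : Invariant W ⟨b :: S, B, A⟩ where
  arc_mem := hI.arc_mem
  mem_of_mem_stack_buffer x hx := hI.mem_of_mem_stack_buffer x (List.perm_middle.mem_iff.mpr hx)
  nodup := List.perm_middle.nodup_iff.mp hI.nodup
  head_unique := hI.head_unique
  buffer_headless d hd := hI.buffer_headless d (List.mem_cons_of_mem b hd)
  root_headless := hI.root_headless
  root_front h0 := by
    obtain ⟨rfl, hb⟩ := hI.root_front (List.mem_cons_of_mem b h0)
    obtain rfl : b = 0 := Option.some.inj hb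
    exact ((List.nodup_cons.mp hI.nodup).1 h0).elim
  heads_below :=
    ⟨fun h hb => (hI.buffer_headless b List.mem_cons_self h hb).elim, hI.heads_below⟩
  reachable d hd := by
    obtain ⟨a, ha, had⟩ := hI.reachable d hd
    exact ⟨a, List.perm_middle.mem_iff.mp ha, had⟩

theorem rightArc (hI : Invariant W ⟨s :: S, b :: B, A⟩) :
    Invariant W ⟨b :: s :: S, B, insert (s, b) A⟩ := by
  have hnd : (b :: (s :: S ++ B)).Nodup := List.perm_middle.nodup_iff.mp hI.nodup
  have hbS : b ∉ s :: S := fun hbS => (List.nodup_cons.mp hnd).1 (List.mem_append_left B hbS)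
  have hbB : b ∉ B := fun hbB => (List.nodup_cons.mp hnd).1 (List.mem_append_right _ hbB)
  have hS : s :: S ≠ [] := List.cons_ne_nil s S
  have hb0 : b ≠ 0 := by
    rintro rfl
    exact hS (hI.root_front List.mem_cons_self).1
  have hb : ∀ k, (k, b) ∉ A := hI.buffer_headless b List.mem_cons_self
  refine ⟨?_, ?_, hnd, head_unique_insert hI.head_unique hb, ?_, ?_, ?_, ?_, ?_⟩
  · rintro e (rfl | he)
    · exact ⟨hI.mem_of_mem_stack_buffer s (by simp), hI.mem_of_mem_stack_buffer b (by simp)⟩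
    · exact hI.arc_mem e he
  · exact fun x hx => hI.mem_of_mem_stack_buffer x (List.perm_middle.mem_iff.mpr hx)
  · rintro d hd k (hk | hk)
    · exact hbB ((Prod.mk.inj hk).2 ▸ hd)
    · exact hI.buffer_headless d (List.mem_cons_of_mem b hd) k hk
  · rintro k (hk | hk)
    · exact hb0 (Prod.mk.inj hk).2.symm
    · exact hI.root_headless k hk
  · exact fun h0 => (hS (hI.root_front (List.mem_cons_of_mem b h0)).1).elim
  · refine ⟨fun h hh => ?_, hI.heads_below.insert hbS⟩
    rcases hh with hh | hh
    · rw [(Prod.mk.inj hh).1]; exact List.mem_cons_self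
    · exact (hb h hh).elim
  · intro d hd
    obtain ⟨a, ha, had⟩ := hI.reachable d hd
    exact ⟨a, List.perm_middle.mem_iff.mp ha,
      ReflTransGen.mono (fun _ _ => Set.mem_insert_of_mem _) _ _ had⟩

theorem leftArc (hI : Invariant W ⟨s :: S, b :: B, A⟩) (hs0 : s ≠ 0)
    (hs : ∀ k, (k, s) ∉ A) : Invariant W ⟨S, b :: B, insert (b, s) A⟩ := by
  have hnd := List.nodup_cons.mp hI.nodup
  have hS : s :: S ≠ [] := List.cons_ne_nil s S
  refine ⟨?_, fun x hx => hI.mem_of_mem_stack_buffer x (List.mem_cons_of_mem s hx), hnd.2,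
    head_unique_insert hI.head_unique hs, ?_, ?_, ?_, hI.heads_below.2.insert ?_, ?_⟩
  · rintro e (rfl | he)
    · exact ⟨hI.mem_of_mem_stack_buffer b (by simp), hI.mem_of_mem_stack_buffer s (by simp)⟩
    · exact hI.arc_mem e he
  · rintro d hd k (hk | hk)
    · exact hnd.1 ((Prod.mk.inj hk).2 ▸ List.mem_append_right S hd)
    · exact hI.buffer_headless d hd k hk
  · rintro k (hk | hk)
    · exact hs0 (Prod.mk.inj hk).2.symm
    · exact hI.root_headless k hk
  · exact fun h0 => (hS (hI.root_front h0).1).elim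
  · exact fun hsS => hnd.1 (List.mem_append_left _ hsS)
  · intro d hd
    obtain ⟨a, ha, had⟩ := hI.reachable d hd
    exact exists_reflTransGen_of_pop (by simp) (Set.mem_insert _ _)
      ⟨a, ha, ReflTransGen.mono (fun _ _ => Set.mem_insert_of_mem _) _ _ had⟩

theorem reduce (hI : Invariant W ⟨s :: S, B, A⟩) (hs : ∃ k, (k, s) ∈ A) :
    Invariant W ⟨S, B, A⟩ := by
  obtain ⟨k, hk⟩ := hs
  have hS : s :: S ≠ [] := List.cons_ne_nil s S
  exact
  { arc_mem := hI.arc_mem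
    mem_of_mem_stack_buffer := fun x hx => hI.mem_of_mem_stack_buffer x (List.mem_cons_of_mem s hx)
    nodup := (List.nodup_cons.mp hI.nodup).2
    head_unique := hI.head_unique
    buffer_headless := hI.buffer_headless
    root_headless := hI.root_headless
    root_front := fun h0 => (hS (hI.root_front h0).1).elim
    heads_below := hI.heads_below.2
    reachable := fun d hd => exists_reflTransGen_of_pop
      (List.mem_append_left B (hI.heads_below.1 k hk)) hk (hI.reachable d hd) }

theorem step {c c' : Config} (hI : Invariant W c) (h : Step c c') : Invariant W c' := by
  cases h with
  | shift => exact hI.shift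
  | rightArc => exact hI.rightArc
  | leftArc _ _ _ _ _ hs0 hs => exact hI.leftArc hs0 hs
  | reduce _ _ _ _ hs => exact hI.reduce hs

theorem reflTransGen {c c' : Config} (hI : Invariant W c) (h : ReflTransGen Step c c') :
    Invariant W c' := by
  induction h with
  | refl => exact hI
  | tail _ hstep ih => exact ih.step hstep

end Invariant

end ArcEager

/-- If an arc-eager run from the initial configuration (with the artificial
root `0` at the buffer front, followed by words `1, …, n`) reaches a final
configuration (empty buffer, stack containing only the root), the constructed
arc set is a spanning arborescence on `{0, …, n}` rooted at `0`: it has `n`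
arcs, every non-root word has exactly one head, the root has none, every word
is reachable from the root, and all arcs stay within the sentence. -/
theorem stmt18 (n : ℕ) (c : Config)
    (h : Relation.ReflTransGen Step
      ⟨[], 0 :: (List.range n).map (· + 1), ∅⟩ c)
    (hB : c.B = []) (hS : c.S = [0]) :
    c.A.ncard = n ∧
    (∀ d : ℕ, 1 ≤ d → d ≤ n → ∃! h', (h', d) ∈ c.A) ∧
    (∀ h', (h', 0) ∉ c.A) ∧
    (∀ d : ℕ, 1 ≤ d → d ≤ n →
      Relation.ReflTransGen (fun x y => (x, y) ∈ c.A) 0 d) ∧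
    (∀ e ∈ c.A, e.1 ≤ n ∧ e.2 ≤ n) := by
  have hwords : 0 :: (List.range n).map (· + 1) = List.range (n + 1) := List.range_succ_eq_map.symm
  have hI : ArcEager.Invariant (Set.Iic n) c :=
    (ArcEager.Invariant.init (hwords ▸ List.nodup_range) fun x => by simp [hwords]).reflTransGen h
  have hreach : ∀ d ≤ n, ReflTransGen (fun x y => (x, y) ∈ c.A) 0 d := fun d hd => by
    obtain ⟨a, ha, had⟩ := hI.reachable d hd
    rw [hS, hB, List.append_nil, List.mem_singleton] at ha
    exact ha ▸ had
  have hhead : ∀ d, 1 ≤ d → d ≤ n → ∃ h', (h', d) ∈ c.A := fun d hd1 hd => by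
    obtain rfl | ⟨h', -, hh'⟩ := (hreach d hd).cases_tail
    · omega
    · exact ⟨h', hh'⟩
  have hdeps : Prod.snd '' c.A = Set.Icc 1 n := by
    ext d
    constructor
    · rintro ⟨⟨h', d⟩, hd, rfl⟩
      refine ⟨Nat.one_le_iff_ne_zero.mpr ?_, (hI.arc_mem _ hd).2⟩
      rintro rfl
      exact hI.root_headless h' hd
    · rintro ⟨hd1, hd⟩
      obtain ⟨h', hh'⟩ := hhead d hd1 hd
      exact ⟨(h', d), hh', rfl⟩
  refine ⟨?_, fun d hd1 hd => ?_, hI.root_headless, fun d _ => hreach d, hI.arc_mem⟩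
  · rw [← ncard_image_snd_of_head_unique hI.head_unique, hdeps, ← Finset.coe_Icc,
      Set.ncard_coe_finset, Nat.card_Icc, Nat.add_sub_cancel]
  · obtain ⟨h', hh'⟩ := hhead d hd1 hd
    exact ⟨h', hh', fun k hk => hI.head_unique k h' d hk hh'⟩
end
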